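/- For every integer n ≥ 1, every integer k with 1 ≤ k ≤ n, and real parameters θ > 0, ρ > 0, γ ≥ 0, one has C(n,k) · ∫₀¹ θ · e^{γx} · x^{k-1} · (1-x)^{n-k-1+ρ} dx = (θ/k) · (n(n-1)⋯(n-k+1)) / ((n-1+ρ)(n-2+ρ)⋯(n-k+ρ)) · (1 + Σ_{m=1}^∞ (k)_m γ^m / ((n+ρ)_m · m!)), where the integral is over the open unit interval. (This is the expected gene frequency spectrum E[G_k^{(n)}] in the Wright–Fisher model for bacterial genomes with horizontal gene flow, Theorem 1.) -/

import Mathlib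

/-!
Expand `e^{γx}` in its power series and integrate term by term, which is legitimate because
the series of integrals of the absolute values is dominated by `e^{|γ|} ∫ x^{k-1} (1-x)^{c-1}`
with `c = n - k + ρ > 0`. The `m`-th term is a Beta integral `B(k+m, c) = (k-1+m)! / (c)_{k+m}`,
and the factorisations `(c)_{k+m} = (c)_k (n+ρ)_m`, `(k-1+m)! = (k-1)! (k)_m` turn the sum into
Kummer's series `1 + Σ_{m ≥ 1} (k)_m γ^m / ((n+ρ)_m m!)`, while `C(n,k) (k-1)! = n⋯(n-k+1) / k`
and `(c)_k = (n-1+ρ)⋯(n-k+ρ)` produce the prefactor.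
-/

open scoped BigOperators

/-- The real Pochhammer symbol `(a)_m = a (a+1) ⋯ (a+m-1)`. -/
noncomputable def pochR (a : ℝ) (m : ℕ) : ℝ := (ascPochhammer ℝ m).eval a

open MeasureTheory Set Polynomial Finset Nat

lemma pochR_pos {a : ℝ} (ha : 0 < a) (m : ℕ) : 0 < pochR a m :=
  ascPochhammer_pos m a ha

lemma pochR_add (a : ℝ) (m l : ℕ) : pochR a (m + l) = pochR a m * pochR (a + m) l := by
  rw [pochR, ← ascPochhammer_mul, eval_mul, eval_comp]
  simp [pochR]

lemma pochR_eq_prod_range (a : ℝ) (m : ℕ) : pochR a m = ∏ j ∈ range m, (a + j) := by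
  induction m with
  | zero => simp [pochR]
  | succ m ih => rw [pochR, ascPochhammer_succ_eval, ← pochR, ih, prod_range_succ]

lemma factorial_mul_pochR (r m : ℕ) : (r ! : ℝ) * pochR (r + 1) m = ((r + m)! : ℝ) :=
  factorial_mul_ascPochhammer ℝ r m

lemma prod_range_sub_eq_pochR (b : ℝ) (k : ℕ) :
    ∏ j ∈ range k, (b - j) = pochR (b - k + 1) k := by
  rw [← descPochhammer_eval_eq_prod_range, descPochhammer_eval_eq_ascPochhammer, pochR]

lemma prod_range_natCast_sub_eq_factorial_mul_choose (n k : ℕ) :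
    ∏ j ∈ range k, ((n : ℝ) - j) = k ! * n.choose k := by
  rw [← descPochhammer_eval_eq_prod_range, descPochhammer_eval_eq_descFactorial,
    descFactorial_eq_factorial_mul_choose, cast_mul]

lemma intervalIntegrable_pow_mul_one_sub_rpow {c : ℝ} (hc : 0 < c) (p : ℕ) :
    IntervalIntegrable (fun x : ℝ => x ^ p * (1 - x) ^ (c - 1)) volume 0 1 := by
  have h : IntervalIntegrable (fun x : ℝ => (1 - x) ^ (c - 1)) volume 0 1 := by
    simpa using ((intervalIntegral.intervalIntegrable_rpow' (a := 0) (b := 1)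
      (r := c - 1) (by linarith)).comp_sub_left 1).symm
  exact h.continuousOn_mul (continuous_pow p).continuousOn

lemma ofReal_pow_mul_one_sub_rpow {x : ℝ} (hx : x ≤ 1) (c : ℝ) (p : ℕ) :
    ((x ^ p * (1 - x) ^ (c - 1) : ℝ) : ℂ) =
      (x : ℂ) ^ ((p : ℂ) + 1 - 1) * (1 - (x : ℂ)) ^ ((c : ℂ) - 1) := by
  rw [add_sub_cancel_right, Complex.cpow_natCast, Complex.ofReal_mul,
    Complex.ofReal_cpow (by linarith)]
  push_cast
  rfl

lemma integral_pow_mul_one_sub_rpow {c : ℝ} (hc : 0 < c) (p : ℕ) :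
    ∫ x in Ioo (0 : ℝ) 1, x ^ p * (1 - x) ^ (c - 1) = p ! / pochR c (p + 1) := by
  have hbeta := Complex.betaIntegral_eval_nat_add_one_right (u := c) (by simpa using hc) p
  rw [Complex.betaIntegral_symm, Complex.betaIntegral] at hbeta
  apply Complex.ofReal_injective
  rw [← integral_Ioc_eq_integral_Ioo, ← intervalIntegral.integral_of_le zero_le_one,
    ← intervalIntegral.integral_ofReal, intervalIntegral.integral_congr
      fun x hx => ofReal_pow_mul_one_sub_rpow (hx.2.trans_eq (max_eq_right zero_le_one)) c p,
    hbeta, pochR_eq_prod_range]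
  push_cast
  rfl

lemma hasSum_integral_exp_mul {μ : Measure ℝ} {f : ℝ → ℝ} (hf : Integrable f μ)
    (hμ : ∀ᵐ x ∂μ, |x| ≤ 1) (γ : ℝ) :
    HasSum (fun m : ℕ => γ ^ m / m ! * ∫ x, x ^ m * f x ∂μ)
      (∫ x, Real.exp (γ * x) * f x ∂μ) := by
  have hpow_le : ∀ m : ℕ, ∀ᵐ x ∂μ, ‖x ^ m‖ ≤ 1 := fun m =>
    hμ.mono fun x hx => by simpa [abs_pow] using pow_le_one₀ (abs_nonneg x) hx
  have hint : ∀ m : ℕ, Integrable (fun x => x ^ m * f x) μ := fun m =>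
    hf.bdd_mul (continuous_pow m).aestronglyMeasurable (hpow_le m)
  have hnorm (m : ℕ) :
      ∫ x, ‖γ ^ m / m ! * (x ^ m * f x)‖ ∂μ ≤ |γ| ^ m / m ! * ∫ x, ‖f x‖ ∂μ := by
    rw [← integral_const_mul]
    refine integral_mono_ae ((hint m).const_mul _).norm (hf.norm.const_mul _) ?_
    filter_upwards [hpow_le m] with x hx
    calc ‖γ ^ m / m ! * (x ^ m * f x)‖ = |γ| ^ m / m ! * (‖x ^ m‖ * ‖f x‖) := by
          rw [norm_mul, norm_mul, norm_div, norm_pow, Real.norm_eq_abs, RCLike.norm_natCast]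
      _ ≤ |γ| ^ m / m ! * ‖f x‖ := by
          gcongr
          exact mul_le_of_le_one_left (norm_nonneg _) hx
  have hsum := hasSum_integral_of_summable_integral_norm
    (fun m => (hint m).const_mul (γ ^ m / m !))
    (Summable.of_nonneg_of_le (fun m => integral_nonneg fun _ => norm_nonneg _) hnorm
      ((Real.summable_pow_div_factorial |γ|).mul_right _))
  simp only [integral_const_mul] at hsum
  have hexp (x : ℝ) : Real.exp (γ * x) * f x = ∑' m : ℕ, γ ^ m / m ! * (x ^ m * f x) := by
    rw [Real.exp_eq_exp_ℝ,
      ← ((NormedSpace.expSeries_div_hasSum_exp (γ * x)).mul_right (f x)).tsum_eq]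
    exact tsum_congr fun m => by ring
  simpa only [hexp] using hsum

/-- Kummer's integral representation of `₁F₁(p+1; p+1+c; γ)`. -/
lemma hasSum_pochR_mul_pow_div (p : ℕ) {c : ℝ} (hc : 0 < c) (γ : ℝ) :
    HasSum (fun m : ℕ => pochR (p + 1) m * γ ^ m / (pochR (p + 1 + c) m * m !))
      (pochR c (p + 1) / p ! *
        ∫ x in Ioo (0 : ℝ) 1, Real.exp (γ * x) * (x ^ p * (1 - x) ^ (c - 1))) := by
  have hint : IntegrableOn (fun x : ℝ => x ^ p * (1 - x) ^ (c - 1)) (Ioo 0 1) :=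
    (intervalIntegrable_iff_integrableOn_Ioo_of_le zero_le_one).mp
      (intervalIntegrable_pow_mul_one_sub_rpow hc p)
  have hμ : ∀ᵐ x ∂(volume.restrict (Ioo (0 : ℝ) 1)), |x| ≤ 1 :=
    ae_restrict_of_forall_mem measurableSet_Ioo fun x hx =>
      abs_le.mpr ⟨by linarith [hx.1], hx.2.le⟩
  refine ((hasSum_integral_exp_mul hint hμ γ).mul_left (pochR c (p + 1) / p !)).congr_fun
    fun m => ?_
  have hmoment : ∫ x in Ioo (0 : ℝ) 1, x ^ m * (x ^ p * (1 - x) ^ (c - 1)) =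
      p ! * pochR (p + 1) m / (pochR c (p + 1) * pochR (p + 1 + c) m) := by
    simp_rw [← mul_assoc, ← pow_add]
    rw [add_comm m p, integral_pow_mul_one_sub_rpow hc, add_right_comm, pochR_add,
      factorial_mul_pochR, add_comm c]
    push_cast
    ring_nf
  have hpoch := (pochR_pos hc (p + 1)).ne'
  rw [hmoment]
  field_simp

theorem gene_frequency_spectrum_general
    (n k : ℕ) (hk : 1 ≤ k) (hkn : k ≤ n)
    (θ ρ γ : ℝ) (hρ : 0 < ρ) :
    (n.choose k : ℝ) *
      ∫ x in Set.Ioo (0 : ℝ) 1,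
        θ * Real.exp (γ * x) * x ^ (k - 1) * (1 - x) ^ ((n : ℝ) - k - 1 + ρ) =
    θ / k * ((∏ j ∈ Finset.range k, ((n : ℝ) - j)) /
        (∏ j ∈ Finset.range k, ((n : ℝ) - 1 - j + ρ))) *
      (1 + ∑' m : ℕ,
        pochR k (m + 1) * γ ^ (m + 1) /
          (pochR ((n : ℝ) + ρ) (m + 1) * (Nat.factorial (m + 1)))) := by
  obtain ⟨p, rfl⟩ : ∃ p, k = p + 1 := ⟨k - 1, by omega⟩
  set c : ℝ := n - (p + 1 : ℕ) + ρ with hc_def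
  have hc : 0 < c := by
    have : ((p + 1 : ℕ) : ℝ) ≤ n := by exact_mod_cast hkn
    linarith
  have hseries := hasSum_pochR_mul_pow_div p hc γ
  rw [show (p : ℝ) + 1 + c = n + ρ by rw [hc_def]; push_cast; ring] at hseries
  have hintegral : ∫ x in Ioo (0 : ℝ) 1,
      θ * Real.exp (γ * x) * x ^ (p + 1 - 1) * (1 - x) ^ ((n : ℝ) - (p + 1 : ℕ) - 1 + ρ) =
      θ * ∫ x in Ioo (0 : ℝ) 1, Real.exp (γ * x) * (x ^ p * (1 - x) ^ (c - 1)) := by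
    rw [← integral_const_mul]
    refine integral_congr_ae (Filter.Eventually.of_forall fun x => ?_)
    simp only [hc_def, Nat.add_sub_cancel]
    ring_nf
  have hdenominator : ∏ j ∈ range (p + 1), ((n : ℝ) - 1 - j + ρ) = pochR c (p + 1) := by
    rw [prod_congr rfl fun (j : ℕ) _ => show (n : ℝ) - 1 - j + ρ = (n - 1 + ρ) - j by ring,
      prod_range_sub_eq_pochR, hc_def]
    push_cast
    ring_nf
  have hfirst : ∑ m ∈ range 1, pochR (p + 1) m * γ ^ m / (pochR (n + ρ) m * m !) = 1 := by
    simp [pochR]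
  rw [hintegral, hdenominator, prod_range_natCast_sub_eq_factorial_mul_choose, Nat.cast_succ,
    ((hasSum_nat_add_iff' 1).mpr hseries).tsum_eq, hfirst, factorial_succ]
  have hpoch := (pochR_pos hc (p + 1)).ne'
  push_cast
  field_simp
  ring

/-- Theorem 1 (gene frequency spectrum): for `1 ≤ k ≤ n`, `θ > 0`, `ρ > 0`, `γ ≥ 0`,
`C(n,k) ∫₀¹ θ e^{γx} x^{k-1} (1-x)^{n-k-1+ρ} dx
  = (θ/k) ⬝ n⋯(n-k+1)/((n-1+ρ)⋯(n-k+ρ)) ⬝ (1 + Σ_{m≥1} (k)_m γ^m /((n+ρ)_m m!))`. -/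
theorem gene_frequency_spectrum
    (n k : ℕ) (hn : 1 ≤ n) (hk : 1 ≤ k) (hkn : k ≤ n)
    (θ ρ γ : ℝ) (hθ : 0 < θ) (hρ : 0 < ρ) (hγ : 0 ≤ γ) :
    (n.choose k : ℝ) *
      ∫ x in Set.Ioo (0 : ℝ) 1,
        θ * Real.exp (γ * x) * x ^ (k - 1) * (1 - x) ^ ((n : ℝ) - k - 1 + ρ) =
    θ / k * ((∏ j ∈ Finset.range k, ((n : ℝ) - j)) /
        (∏ j ∈ Finset.range k, ((n : ℝ) - 1 - j + ρ))) *
      (1 + ∑' m : ℕ,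
        pochR k (m + 1) * γ ^ (m + 1) /
          (pochR ((n : ℝ) + ρ) (m + 1) * (Nat.factorial (m + 1)))) :=
  gene_frequency_spectrum_general n k hk hkn θ ρ γ hρ
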